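/- arXiv:2504.13433 — 2 statements merged into one kernel-verified Lean document; each statement's English description precedes it below -/
import Mathlib

section
/- For every n ≥ 1, the last symbol of the pillar sequence P_n is 3 (in particular P_n is nonempty). -/
/-- Generation operator: expand a run-length vector `R` starting with symbol `s`,
alternating between `s` and `4 - s` from run to run. -/
def G : List ℕ → ℕ → List ℕ
  | [], _ => []
  | r :: rs, s => List.replicate r s ++ G rs (4 - s)

/-- Pillar sequences: `P 1 = [3]`, `P (n+1) = G (P n) 3` for `n ≥ 1`. -/
def P : ℕ → List ℕ
  | 0 => []
  | 1 => [3]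
  | n + 2 => G (P (n + 1)) 3

/-- Block sequences: `B 1 = G [1,3,3,3,1] 1`, `B (n+1) = B n ++ P n ++ B n` for `n ≥ 1`. -/
def B : ℕ → List ℕ
  | 0 => []
  | 1 => G [1, 3, 3, 3, 1] 1
  | n + 2 => B (n + 1) ++ P (n + 1) ++ B (n + 1)

/-!
Induction on `n` shows that `P n` is a list of odd numbers of odd length. All runs of
`G (P n) 3` are then nonempty, and since there is an odd number of them the last one
carries the starting symbol `3`.
-/

theorem odd_of_mem_G {R : List ℕ} {s x : ℕ} (hs : Odd s) (hs₄ : s ≤ 4) (hx : x ∈ G R s) :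
    Odd x := by
  induction R generalizing s with
  | nil => simp [G] at hx
  | cons r rs ih =>
    rcases List.mem_append.1 hx with hx | hx
    · rw [List.eq_of_mem_replicate hx]
      exact hs
    · exact ih (Nat.Even.sub_odd hs₄ (by decide) hs) (Nat.sub_le 4 s) hx

theorem length_G (R : List ℕ) (s : ℕ) : (G R s).length = R.sum := by
  induction R generalizing s with
  | nil => rfl
  | cons r rs ih => simp [G, ih]

theorem odd_sum_iff_odd_length {R : List ℕ} (hR : ∀ x ∈ R, Odd x) :
    Odd R.sum ↔ Odd R.length := by
  induction R with
  | nil => simp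
  | cons r rs ih =>
    rw [List.forall_mem_cons] at hR
    simp [Nat.odd_add, hR.1, ← Nat.not_odd_iff_even, ih hR.2]

theorem getLast?_G {R : List ℕ} {s : ℕ} (hs₄ : s ≤ 4) (hR : ∀ x ∈ R, 0 < x) (hne : R ≠ []) :
    (G R s).getLast? = some (if Odd R.length then s else 4 - s) := by
  induction R generalizing s with
  | nil => contradiction
  | cons r rs ih =>
    rw [List.forall_mem_cons] at hR
    rcases eq_or_ne rs [] with rfl | hrs
    · simp [G, List.getLast?_replicate, hR.1.ne']
    · have hlast := ih (Nat.sub_le 4 s) hR.2 hrs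
      rw [G, List.getLast?_append, hlast]
      by_cases ho : Odd rs.length
      · simp [ho, Nat.odd_add_one]
      · simp [ho, Nat.odd_add_one]
        omega

theorem P_succ {n : ℕ} (hn : 1 ≤ n) : P (n + 1) = G (P n) 3 := by
  obtain ⟨m, rfl⟩ := Nat.exists_eq_add_of_le' hn
  rfl

theorem odd_of_mem_P_and_odd_length_P {n : ℕ} (hn : 1 ≤ n) :
    (∀ x ∈ P n, Odd x) ∧ Odd (P n).length := by
  induction n, hn using Nat.le_induction with
  | base => exact ⟨by norm_num [P], by decide⟩
  | succ n hn ih =>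
    rw [P_succ hn]
    refine ⟨fun x hx => odd_of_mem_G (by decide) (by norm_num) hx, ?_⟩
    rw [length_G, odd_sum_iff_odd_length ih.1]
    exact ih.2

/-- For every `n ≥ 1`, the last symbol of the pillar `P n` is `3`
(in particular `P n` is nonempty). -/
theorem pillar_last_eq_three : ∀ n : ℕ, 1 ≤ n → (P n).getLast? = some 3 := by
  rintro (_ | _ | m) hn
  · exact absurd hn (by decide)
  · rfl
  have hm : 1 ≤ m + 1 := Nat.le_add_left 1 m
  obtain ⟨hodd, hlen⟩ := odd_of_mem_P_and_odd_length_P hm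
  rw [P_succ hm, getLast?_G (by norm_num) (fun x hx => (hodd x hx).pos)
    (List.ne_nil_of_length_pos hlen.pos), if_pos hlen]
end

section
/- Let α > 2 be the real root of x³ − 2x² − 1 = 0 and set d = (3 − α)/2. Suppose the pillar densities δ_n = o_n/m_n converge to d. Then the block lengths satisfy lim_{n→∞} L_{n+1}/L_n = α. -/
/-!
The pillar lengths obey `m (n+1) = 3 m n - 2 o n`, so `m (n+1) / m n = 3 - 2 δ n → 3 - 2 d = α`,
and the block lengths obey `L (n+1) = 2 L n + m n`. Since the pillars grow at rate `α > 2`, the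
ratio `y n = L n / m n` satisfies `y (n+1) = (2 y n + 1) / (m (n+1) / m n)`, which is eventually a
contraction (factor close to `2 / α < 1`) with a perturbation tending to zero. Hence
`y n → 1 / (α - 2)`, and `L (n+1) / L n = 2 + 1 / y n → α`.
-/

open Filter Topology

lemma G_length : ∀ (rs : List ℕ) (s : ℕ), (G rs s).length = rs.sum
  | [], _ => rfl
  | r :: rs, s => by simp [G, G_length rs]

lemma mem_G : ∀ (rs : List ℕ) {s : ℕ}, (s = 1 ∨ s = 3) → ∀ x ∈ G rs s, x = 1 ∨ x = 3
  | [], _, _, x, hx => by simp [G] at hx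
  | r :: rs, s, hs, x, hx => by
    rcases List.mem_append.mp hx with hx | hx
    · exact List.eq_of_mem_replicate hx ▸ hs
    · exact mem_G rs (by omega) x hx

lemma mem_P : ∀ (n : ℕ), ∀ x ∈ P n, x = 1 ∨ x = 3
  | 0, x, hx => by simp [P] at hx
  | 1, x, hx => by simp_all [P]
  | n + 2, x, hx => mem_G (P (n + 1)) (Or.inr rfl) x hx

lemma List.sum_add_two_mul_count_one : ∀ {l : List ℕ}, (∀ x ∈ l, x = 1 ∨ x = 3) →
    l.sum + 2 * l.count 1 = 3 * l.length
  | [], _ => rfl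
  | a :: l, h => by
    have ih := sum_add_two_mul_count_one fun x hx => h x (List.mem_cons_of_mem a hx)
    rcases h a List.mem_cons_self with rfl | rfl <;> simp <;> omega

lemma length_P_succ_add {n : ℕ} (hn : 1 ≤ n) :
    (P (n + 1)).length + 2 * (P n).count 1 = 3 * (P n).length := by
  obtain ⟨k, rfl⟩ : ∃ k, n = k + 1 := ⟨n - 1, by omega⟩
  rw [show P (k + 2) = G (P (k + 1)) 3 from rfl, G_length]
  exact List.sum_add_two_mul_count_one (mem_P _)

lemma length_P_pos : ∀ {n : ℕ}, 1 ≤ n → 0 < (P n).length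
  | 1, _ => by simp [P]
  | n + 2, _ => by
    have := length_P_succ_add (n := n + 1) (by omega)
    have := length_P_pos (n := n + 1) (by omega)
    show 0 < (P (n + 1 + 1)).length
    have : (P (n + 1)).count 1 ≤ (P (n + 1)).length := List.count_le_length
    omega

lemma length_P_succ_div {n : ℕ} (hn : 1 ≤ n) :
    ((P (n + 1)).length : ℝ) / (P n).length = 3 - 2 * ((P n).count 1 / (P n).length) := by
  have hpos : ((P n).length : ℝ) ≠ 0 := by exact_mod_cast (length_P_pos hn).ne'
  have hrec : ((P (n + 1)).length : ℝ) = 3 * (P n).length - 2 * (P n).count 1 := by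
    have := length_P_succ_add hn
    rw [eq_sub_iff_add_eq]
    exact_mod_cast this
  rw [hrec]
  field_simp

lemma length_B_succ {n : ℕ} (hn : 1 ≤ n) :
    (B (n + 1)).length = 2 * (B n).length + (P n).length := by
  obtain ⟨k, rfl⟩ : ∃ k, n = k + 1 := ⟨n - 1, by omega⟩
  simp only [B, List.length_append]
  ring

lemma tendsto_zero_of_le_mul_add {e ε : ℕ → ℝ} {q : ℝ} (hq0 : 0 ≤ q) (hq1 : q < 1)
    (he : ∀ n, 0 ≤ e n) (hε : Tendsto ε atTop (𝓝 0))
    (hrec : ∀ᶠ n in atTop, e (n + 1) ≤ q * e n + ε n) :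
    Tendsto e atTop (𝓝 0) := by
  rw [Metric.tendsto_atTop]
  intro δ hδ
  have hslack : 0 < (1 - q) * δ / 2 := by have := sub_pos.mpr hq1; positivity
  obtain ⟨N, hN⟩ := eventually_atTop.mp (hrec.and (hε.eventually_lt_const hslack))
  -- `δ / 2` is the fixed point of `x ↦ q x + (1 - q) δ / 2`, which dominates the recursion past `N`
  have hiter : ∀ k, e (N + k) ≤ q ^ k * e N + δ / 2 := by
    intro k
    induction k with
    | zero => simp; linarith
    | succ k ih =>
      obtain ⟨hstep, hsmall⟩ := hN (N + k) (by omega)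
      calc e (N + (k + 1)) ≤ q * e (N + k) + ε (N + k) := hstep
        _ ≤ q * (q ^ k * e N + δ / 2) + (1 - q) * δ / 2 := by gcongr
        _ = q ^ (k + 1) * e N + δ / 2 := by ring
  have hpow : Tendsto (fun k => q ^ k * e N) atTop (𝓝 0) := by
    simpa using (tendsto_pow_atTop_nhds_zero_of_lt_one hq0 hq1).mul_const (e N)
  obtain ⟨K, hK⟩ := eventually_atTop.mp (hpow.eventually_lt_const (half_pos hδ))
  refine ⟨N + K, fun n hn => ?_⟩
  obtain ⟨k, rfl⟩ : ∃ k, n = N + k := ⟨n - N, by omega⟩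
  rw [Real.dist_eq, sub_zero, abs_of_nonneg (he _)]
  linarith [hiter k, hK k (by omega)]

section LinearRecurrence

variable {l m : ℕ → ℝ} {a α : ℝ}

theorem tendsto_div_of_add_recurrence (ha : 0 ≤ a) (haα : a < α)
    (hrec : ∀ᶠ n in atTop, l (n + 1) = a * l n + m n)
    (hm : Tendsto (fun n => m (n + 1) / m n) atTop (𝓝 α)) :
    Tendsto (fun n => l n / m n) atTop (𝓝 (α - a)⁻¹) := by
  set ρ := fun n => m (n + 1) / m n
  set y := fun n => l n / m n
  set c := (α - a)⁻¹
  have hα : 0 < α := by linarith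
  have hcα : α * c = a * c + 1 := by
    simp only [c]; field_simp [(sub_pos.mpr haα).ne']; ring
  set ε := fun n => |a * c + 1| * |(ρ n)⁻¹ - α⁻¹|
  have hε : Tendsto ε atTop (𝓝 0) := by
    have := ((hm.inv₀ hα.ne').sub_const α⁻¹).abs.const_mul |a * c + 1|
    simpa using this
  set q := 2 * a / (a + α)
  have hq1 : q < 1 := by rw [div_lt_one (by linarith)]; linarith
  rw [tendsto_iff_norm_sub_tendsto_zero]
  refine tendsto_zero_of_le_mul_add (by positivity) hq1 (fun n => norm_nonneg _) hε ?_
  filter_upwards [hrec, hm.eventually_const_lt (show (a + α) / 2 < α by linarith)]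
    with n hln hρn
  have hρ : 0 < ρ n := by linarith
  have hmn : m n ≠ 0 := fun h => by simp [ρ, h] at hρ
  have hmn1 : m (n + 1) ≠ 0 := fun h => by simp [ρ, h] at hρ
  have hfix : (a * c + 1) * α⁻¹ = c := by rw [← hcα]; field_simp
  have hstep : y (n + 1) - c = a / ρ n * (y n - c) + (a * c + 1) * ((ρ n)⁻¹ - α⁻¹) := by
    have : y (n + 1) = (a * y n + 1) / ρ n := by
      simp only [y, ρ, hln]; field_simp
    rw [this]; linear_combination hfix
  have hcontr : a / ρ n ≤ q := by
    rw [div_le_div_iff₀ hρ (by linarith)]; nlinarith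
  simp only [Real.norm_eq_abs, hstep]
  calc |a / ρ n * (y n - c) + (a * c + 1) * ((ρ n)⁻¹ - α⁻¹)|
      ≤ a / ρ n * |y n - c| + ε n := by
        refine (abs_add_le _ _).trans ?_
        rw [abs_mul, abs_of_nonneg (by positivity : 0 ≤ a / ρ n), abs_mul]
    _ ≤ q * |y n - c| + ε n := by gcongr

theorem tendsto_div_of_add_recurrence_succ (ha : 0 ≤ a) (haα : a < α)
    (hrec : ∀ᶠ n in atTop, l (n + 1) = a * l n + m n)
    (hm : Tendsto (fun n => m (n + 1) / m n) atTop (𝓝 α)) :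
    Tendsto (fun n => l (n + 1) / l n) atTop (𝓝 α) := by
  have hy := tendsto_div_of_add_recurrence ha haα hrec hm
  have hc : (α - a)⁻¹ ≠ 0 := inv_ne_zero (sub_pos.mpr haα).ne'
  have hlim := (hy.inv₀ hc).const_add a
  rw [inv_inv, add_sub_cancel] at hlim
  refine hlim.congr' ?_
  filter_upwards [hrec, hy.eventually_ne hc] with n hln hyn
  have hl : l n ≠ 0 := fun h => hyn (by simp [h])
  rw [hln, inv_div]
  field_simp

end LinearRecurrence

theorem block_growth_rate_general (α : ℝ) (hα2 : 2 < α)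
    (d : ℝ) (hd : d = (3 - α) / 2)
    (hlim : Filter.Tendsto
      (fun n => ((P n).count 1 : ℝ) / ((P n).length : ℝ)) Filter.atTop (nhds d)) :
    Filter.Tendsto
      (fun n => ((B (n + 1)).length : ℝ) / ((B n).length : ℝ))
      Filter.atTop (nhds α) := by
  have hpillar : Tendsto (fun n => ((P (n + 1)).length : ℝ) / (P n).length) atTop (𝓝 α) := by
    have h := (hlim.const_mul 2).const_sub 3
    rw [hd, show 3 - 2 * ((3 - α) / 2) = α by ring] at h
    refine h.congr' ?_
    filter_upwards [eventually_ge_atTop 1] with n hn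
    exact (length_P_succ_div hn).symm
  refine tendsto_div_of_add_recurrence_succ (l := fun n => ((B n).length : ℝ))
    (m := fun n => ((P n).length : ℝ)) zero_le_two hα2 ?_ hpillar
  filter_upwards [eventually_ge_atTop 1] with n hn
  exact_mod_cast length_B_succ hn

/-- Let `α > 2` be the real root of `x³ − 2x² − 1 = 0` and `d = (3 − α)/2`. If the
pillar densities `δ n = o n / m n` converge to `d`, then `L (n+1) / L n → α`. -/
theorem block_growth_rate (α : ℝ) (hα2 : 2 < α) (hα : α ^ 3 - 2 * α ^ 2 - 1 = 0)
    (d : ℝ) (hd : d = (3 - α) / 2)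
    (hlim : Filter.Tendsto
      (fun n => ((P n).count 1 : ℝ) / ((P n).length : ℝ)) Filter.atTop (nhds d)) :
    Filter.Tendsto
      (fun n => ((B (n + 1)).length : ℝ) / ((B n).length : ℝ))
      Filter.atTop (nhds α) :=
  block_growth_rate_general α hα2 d hd hlim
end
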